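/- arXiv:2102.06473 — 4 statements merged into one kernel-verified Lean document; each statement's English description precedes it below -/
import Mathlib

section
/- The intertwining elements satisfy the braid relation κᵣ κᵣ₊₁ κᵣ = κᵣ₊₁ κᵣ κᵣ₊₁ in the rationalized degenerate affine Hecke algebra H_F. -/
open MvPolynomial

/-- The rational function field `k(X₁,...,Xₙ)`. -/
abbrev RatFn (k : Type*) [Field k] (n : ℕ) := FractionRing (MvPolynomial (Fin n) k)

/-- The variable `Xₛ` viewed inside `k(X₁,...,Xₙ)`. -/
noncomputable def RatFn.Xv (k : Type*) [Field k] (n : ℕ) (s : Fin n) : RatFn k n :=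
  algebraMap (MvPolynomial (Fin n) k) (RatFn k n) (X s)

/-- The action of a permutation on `k(X₁,...,Xₙ)` by permuting the variables. -/
noncomputable def RatFn.act (k : Type*) [Field k] (n : ℕ) (σ : Equiv.Perm (Fin n)) :
    RatFn k n ≃+* RatFn k n :=
  IsFractionRing.ringEquivOfRingEquiv (renameEquiv k σ).toRingEquiv

/-- The Demazure operator `∂(f) = (σ_{a,b}(f) - f)/(X_a - X_b)` on `k(X₁,...,Xₙ)`. -/
noncomputable def RatFn.dem (k : Type*) [Field k] (n : ℕ) (a b : Fin n) (f : RatFn k n) :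
    RatFn k n :=
  (RatFn.act k n (Equiv.swap a b) f - f) / (RatFn.Xv k n a - RatFn.Xv k n b)

set_option maxHeartbeats 1000000

section Aux
variable {F A : Type*} [Field F] [Ring A] (ι : F →+* A) (s1 s2 : F ≃+* F)
  (T1 T2 : A) (x y z : F)

theorem braid_aux
    (hs1x : s1 x = y) (hs1y : s1 y = x) (hs1z : s1 z = z)
    (hs2x : s2 x = x) (hs2y : s2 y = z) (hs2z : s2 z = y)
    (hxy : x ≠ y) (hyz : y ≠ z) (hxz : x ≠ z)
    (h1 : ∀ f, T1 * ι f = ι (s1 f) * T1 + ι ((s1 f - f) * (x - y)⁻¹))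
    (h2 : ∀ f, T2 * ι f = ι (s2 f) * T2 + ι ((s2 f - f) * (y - z)⁻¹))
    (hT1 : T1 * T1 = 1) (hT2 : T2 * T2 = 1)
    (hbr : T1 * T2 * T1 = T2 * T1 * T2) :
    (T1 + ι (x - y)⁻¹) * (T2 + ι (y - z)⁻¹) * (T1 + ι (x - y)⁻¹)
      = (T2 + ι (y - z)⁻¹) * (T1 + ι (x - y)⁻¹) * (T2 + ι (y - z)⁻¹) := by
  set c := (x - y)⁻¹ with hc
  set d := (y - z)⁻¹ with hd
  set e := (x - z)⁻¹ with he
  have hxy' : x - y ≠ 0 := sub_ne_zero.mpr hxy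
  have hyz' : y - z ≠ 0 := sub_ne_zero.mpr hyz
  have hxz' : x - z ≠ 0 := sub_ne_zero.mpr hxz
  have hs1c : s1 c = -c := by
    rw [hc, map_inv₀, map_sub, hs1x, hs1y, ← neg_sub x y, inv_neg]
  have hs1d : s1 d = e := by rw [hd, he, map_inv₀, map_sub, hs1y, hs1z]
  have hs1e : s1 e = d := by rw [hd, he, map_inv₀, map_sub, hs1x, hs1z]
  have hs2c : s2 c = e := by rw [hc, he, map_inv₀, map_sub, hs2x, hs2y]
  have hs2d : s2 d = -d := by
    rw [hd, map_inv₀, map_sub, hs2y, hs2z, ← neg_sub y z, inv_neg]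
  have hs2e : s2 e = c := by rw [hc, he, map_inv₀, map_sub, hs2x, hs2z]
  -- field identities
  have key : c * d = c * e + d * e := by
    rw [hc, hd, he]; field_simp; ring
  have i1 : (d + c) * e = c * d := by linear_combination -key
  have i2 : (d - e) * c + c * e = c * d := by ring
  have i3 : ((d + c) * e - (e - c) * d) * c + c * ((e - c) * d) + e * (1 - c * c)
      = e + c * d * e := by ring
  have i4 : (c + d) * e = c * d := by linear_combination -key
  have i5 : (c - e) * d + d * e = c * d := by ring
  have i6 : ((c + d) * e - (e - d) * c) * d + d * ((e - d) * c) + e * (1 - d * d)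
      = e + c * d * e := by ring
  -- commutation instances
  have t1 : ∀ f g, s1 f = g → T1 * ι f = ι g * T1 + ι ((g - f) * c) := by
    intro f g hg; rw [h1 f, hg]
  have t2 : ∀ f g, s2 f = g → T2 * ι f = ι g * T2 + ι ((g - f) * d) := by
    intro f g hg; rw [h2 f, hg]
  have t1c := t1 c (-c) hs1c
  have t1d := t1 d e hs1d
  have t1e := t1 e d hs1e
  have t1w : T1 * ι ((e - c) * d)
      = ι ((d + c) * e) * T1 + ι (((d + c) * e - (e - c) * d) * c) :=
    t1 _ _ (by rw [map_mul, map_sub, hs1e, hs1c, hs1d]; ring)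
  have t2c := t2 c e hs2c
  have t2d := t2 d (-d) hs2d
  have t2e := t2 e c hs2e
  have t2w : T2 * ι ((e - d) * c)
      = ι ((c + d) * e) * T2 + ι (((c + d) * e - (e - d) * c) * d) :=
    t2 _ _ (by rw [map_mul, map_sub, hs2e, hs2d, hs2c]; ring)
  -- kappa relations
  have hk1d : (T1 + ι c) * ι d = ι e * (T1 + ι c) := by
    rw [add_mul, t1d, mul_add, ← map_mul, ← map_mul, add_assoc, ← map_add]
    congr 1
    ring
  have hk2c : (T2 + ι d) * ι c = ι e * (T2 + ι d) := by
    rw [add_mul, t2c, mul_add, ← map_mul, ← map_mul, add_assoc, ← map_add]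
    congr 1
    ring
  have hk1sq : (T1 + ι c) * (T1 + ι c) = ι (1 - c * c) := by
    calc (T1 + ι c) * (T1 + ι c)
        = T1 * T1 + T1 * ι c + ι c * T1 + ι (c * c) := by rw [map_mul ι c c]; noncomm_ring
      _ = 1 + (ι (-c) * T1 + ι ((-c - c) * c)) + ι c * T1 + ι (c * c) := by rw [hT1, t1c]
      _ = (ι (-c) + ι c) * T1 + (1 + ι ((-c - c) * c + c * c)) := by
          rw [map_add ι ((-c - c) * c) (c * c), add_mul]; noncomm_ring
      _ = ι (1 - c * c) := by
          rw [← map_add, show (-c + c : F) = 0 from by ring, map_zero, zero_mul, zero_add,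
            show ((-c - c) * c + c * c : F) = -(c * c) from by ring, ← map_one ι, ← map_add]
          congr 1
          ring
  have hk2sq : (T2 + ι d) * (T2 + ι d) = ι (1 - d * d) := by
    calc (T2 + ι d) * (T2 + ι d)
        = T2 * T2 + T2 * ι d + ι d * T2 + ι (d * d) := by rw [map_mul ι d d]; noncomm_ring
      _ = 1 + (ι (-d) * T2 + ι ((-d - d) * d)) + ι d * T2 + ι (d * d) := by rw [hT2, t2d]
      _ = (ι (-d) + ι d) * T2 + (1 + ι ((-d - d) * d + d * d)) := by
          rw [map_add ι ((-d - d) * d) (d * d), add_mul]; noncomm_ring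
      _ = ι (1 - d * d) := by
          rw [← map_add, show (-d + d : F) = 0 from by ring, map_zero, zero_mul, zero_add,
            show ((-d - d) * d + d * d : F) = -(d * d) from by ring, ← map_one ι, ← map_add]
          congr 1
          ring
  -- main expansions
  have hL : (T1 + ι c) * (T2 + ι d) * (T1 + ι c)
      = T1*T2*T1 + ι d*(T1*T2) + ι c*(T2*T1) + ι (c*d)*T1 + ι (c*d)*T2
        + ι (e + c*d*e) := by
    calc (T1 + ι c) * (T2 + ι d) * (T1 + ι c)
        = (T1 + ι c)*T2*(T1 + ι c) + ι e * ((T1 + ι c)*(T1 + ι c)) := by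
          rw [mul_add (T1 + ι c) T2 (ι d), add_mul, hk1d, mul_assoc (ι e)]
      _ = (T1 + ι c)*T2*(T1 + ι c) + ι (e*(1 - c*c)) := by rw [hk1sq, ← map_mul]
      _ = T1*(T2*T1) + T1*(T2*ι c) + ι c*(T2*T1) + ι c*(T2*ι c) + ι (e*(1 - c*c)) := by
          noncomm_ring
      _ = T1*(T2*T1) + T1*(ι e*T2 + ι ((e - c)*d)) + ι c*(T2*T1)
            + ι c*(ι e*T2 + ι ((e - c)*d)) + ι (e*(1 - c*c)) := by rw [t2c]
      _ = T1*(T2*T1) + (T1*ι e*T2 + T1*ι ((e - c)*d)) + ι c*(T2*T1)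
            + (ι c*ι e*T2 + ι c*ι ((e - c)*d)) + ι (e*(1 - c*c)) := by noncomm_ring
      _ = T1*(T2*T1) + ((ι d*T1 + ι ((d - e)*c))*T2
              + (ι ((d + c)*e)*T1 + ι (((d + c)*e - (e - c)*d)*c))) + ι c*(T2*T1)
            + (ι (c*e)*T2 + ι (c*((e - c)*d))) + ι (e*(1 - c*c)) := by
          rw [t1e, t1w, ← map_mul, ← map_mul]
      _ = T1*T2*T1 + ι d*(T1*T2) + ι c*(T2*T1) + ι ((d + c)*e)*T1
            + ι ((d - e)*c + c*e)*T2
            + ι (((d + c)*e - (e - c)*d)*c + c*((e - c)*d) + e*(1 - c*c)) := by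
          rw [map_add ι ((d - e)*c) (c*e),
            map_add ι (((d + c)*e - (e - c)*d)*c + c*((e - c)*d)) (e*(1 - c*c)),
            map_add ι (((d + c)*e - (e - c)*d)*c) (c*((e - c)*d))]
          noncomm_ring
      _ = T1*T2*T1 + ι d*(T1*T2) + ι c*(T2*T1) + ι (c*d)*T1 + ι (c*d)*T2
            + ι (e + c*d*e) := by rw [i3, i1, i2]
  have hR : (T2 + ι d) * (T1 + ι c) * (T2 + ι d)
      = T2*T1*T2 + ι d*(T1*T2) + ι c*(T2*T1) + ι (c*d)*T1 + ι (c*d)*T2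
        + ι (e + c*d*e) := by
    calc (T2 + ι d) * (T1 + ι c) * (T2 + ι d)
        = (T2 + ι d)*T1*(T2 + ι d) + ι e * ((T2 + ι d)*(T2 + ι d)) := by
          rw [mul_add (T2 + ι d) T1 (ι c), add_mul, hk2c, mul_assoc (ι e)]
      _ = (T2 + ι d)*T1*(T2 + ι d) + ι (e*(1 - d*d)) := by rw [hk2sq, ← map_mul]
      _ = T2*(T1*T2) + T2*(T1*ι d) + ι d*(T1*T2) + ι d*(T1*ι d) + ι (e*(1 - d*d)) := by
          noncomm_ring
      _ = T2*(T1*T2) + T2*(ι e*T1 + ι ((e - d)*c)) + ι d*(T1*T2)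
            + ι d*(ι e*T1 + ι ((e - d)*c)) + ι (e*(1 - d*d)) := by rw [t1d]
      _ = T2*(T1*T2) + (T2*ι e*T1 + T2*ι ((e - d)*c)) + ι d*(T1*T2)
            + (ι d*ι e*T1 + ι d*ι ((e - d)*c)) + ι (e*(1 - d*d)) := by noncomm_ring
      _ = T2*(T1*T2) + ((ι c*T2 + ι ((c - e)*d))*T1
              + (ι ((c + d)*e)*T2 + ι (((c + d)*e - (e - d)*c)*d))) + ι d*(T1*T2)
            + (ι (d*e)*T1 + ι (d*((e - d)*c))) + ι (e*(1 - d*d)) := by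
          rw [t2e, t2w, ← map_mul, ← map_mul]
      _ = T2*T1*T2 + ι d*(T1*T2) + ι c*(T2*T1) + ι ((c - e)*d + d*e)*T1
            + ι ((c + d)*e)*T2
            + ι (((c + d)*e - (e - d)*c)*d + d*((e - d)*c) + e*(1 - d*d)) := by
          rw [map_add ι ((c - e)*d) (d*e),
            map_add ι (((c + d)*e - (e - d)*c)*d + d*((e - d)*c)) (e*(1 - d*d)),
            map_add ι (((c + d)*e - (e - d)*c)*d) (d*((e - d)*c))]
          noncomm_ring
      _ = T2*T1*T2 + ι d*(T1*T2) + ι c*(T2*T1) + ι (c*d)*T1 + ι (c*d)*T2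
            + ι (e + c*d*e) := by rw [i6, i5, i4]
  rw [hL, hR, hbr]

end Aux


lemma RatFn.act_Xv (k : Type*) [Field k] (n : ℕ) (σ : Equiv.Perm (Fin n)) (s : Fin n) :
    RatFn.act k n σ (RatFn.Xv k n s) = RatFn.Xv k n (σ s) := by
  unfold RatFn.act RatFn.Xv
  rw [IsFractionRing.ringEquivOfRingEquiv_algebraMap]
  congr 1
  simp [renameEquiv, rename_X]

lemma RatFn.Xv_injective (k : Type*) [Field k] (n : ℕ) :
    Function.Injective (RatFn.Xv k n) := fun _ _ h =>
  X_injective (IsFractionRing.injective (MvPolynomial (Fin n) k) (RatFn k n) h)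

open RatFn in
/-- In the rationalization `H_F` of the degenerate affine Hecke algebra, the intertwining
elements `κᵣ = Tᵣ + 1/(Xᵣ - Xᵣ₊₁)` satisfy the braid relation
`κᵣ κᵣ₊₁ κᵣ = κᵣ₊₁ κᵣ κᵣ₊₁`. -/
theorem intertwiner_braid (k : Type*) [Field k] (n : ℕ)
    (A : Type*) [Ring A] (ι : RatFn k n →+* A) (T : ℕ → A)
    (hT : ∀ (r : ℕ) (hr : r + 1 < n) (f : RatFn k n),
      T r * ι f
        = ι (act k n (Equiv.swap ⟨r, Nat.lt_of_succ_lt hr⟩ ⟨r + 1, hr⟩) f) * T r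
          + ι (dem k n ⟨r, Nat.lt_of_succ_lt hr⟩ ⟨r + 1, hr⟩ f))
    (hT2 : ∀ r : ℕ, r + 1 < n → T r * T r = 1)
    (hTcomm : ∀ r s : ℕ, r + 1 < n → s + 1 < n → r + 1 < s ∨ s + 1 < r →
      T r * T s = T s * T r)
    (hbraid : ∀ r : ℕ, r + 2 < n → T r * T (r + 1) * T r = T (r + 1) * T r * T (r + 1)) :
    ∀ (r : ℕ) (hr : r + 2 < n),
      (T r + ι ((Xv k n ⟨r, by omega⟩ - Xv k n ⟨r + 1, by omega⟩)⁻¹))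
          * (T (r + 1) + ι ((Xv k n ⟨r + 1, by omega⟩ - Xv k n ⟨r + 2, hr⟩)⁻¹))
          * (T r + ι ((Xv k n ⟨r, by omega⟩ - Xv k n ⟨r + 1, by omega⟩)⁻¹))
        = (T (r + 1) + ι ((Xv k n ⟨r + 1, by omega⟩ - Xv k n ⟨r + 2, hr⟩)⁻¹))
          * (T r + ι ((Xv k n ⟨r, by omega⟩ - Xv k n ⟨r + 1, by omega⟩)⁻¹))
          * (T (r + 1) + ι ((Xv k n ⟨r + 1, by omega⟩ - Xv k n ⟨r + 2, hr⟩)⁻¹)) := by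
  
  intro r hr
  refine braid_aux ι (act k n (Equiv.swap ⟨r, by omega⟩ ⟨r + 1, by omega⟩))
      (act k n (Equiv.swap ⟨r + 1, by omega⟩ ⟨r + 2, hr⟩)) (T r) (T (r + 1))
      (Xv k n ⟨r, by omega⟩) (Xv k n ⟨r + 1, by omega⟩) (Xv k n ⟨r + 2, hr⟩)
      ?_ ?_ ?_ ?_ ?_ ?_ ?_ ?_ ?_ ?_ ?_ (hT2 r (by omega)) (hT2 (r + 1) hr) (hbraid r hr)
  · rw [act_Xv, Equiv.swap_apply_left]
  · rw [act_Xv, Equiv.swap_apply_right]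
  · rw [act_Xv, Equiv.swap_apply_of_ne_of_ne
      (Fin.ne_of_val_ne (show r + 2 ≠ r by omega))
      (Fin.ne_of_val_ne (show r + 2 ≠ r + 1 by omega))]
  · rw [act_Xv, Equiv.swap_apply_of_ne_of_ne
      (Fin.ne_of_val_ne (show r ≠ r + 1 by omega))
      (Fin.ne_of_val_ne (show r ≠ r + 2 by omega))]
  · rw [act_Xv, Equiv.swap_apply_left]
  · rw [act_Xv, Equiv.swap_apply_right]
  · intro h
    have h3 : r = r + 1 := congrArg Fin.val (RatFn.Xv_injective k n h)
    omega
  · intro h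
    have h3 : r + 1 = r + 2 := congrArg Fin.val (RatFn.Xv_injective k n h)
    omega
  · intro h
    have h3 : r = r + 2 := congrArg Fin.val (RatFn.Xv_injective k n h)
    omega
  · intro f
    rw [hT r (by omega) f]
    rfl
  · intro f
    rw [hT (r + 1) hr f]
    rfl
end

section
/- In the Lusztig extension L, writing ψᵣ := Σ_{i∈C}[θᵣ − δ_{iᵣ, iᵣ₊₁}/(yᵣ − yᵣ₊₁)]ε(i), one has ψᵣ²ε(i) = 0 if iᵣ = iᵣ₊₁; = (yᵣ − yᵣ₊₁)ε(i) if iᵣ − iᵣ₊₁ = 1 and e ≠ 2; = (yᵣ₊₁ − yᵣ)ε(i) if iᵣ − iᵣ₊₁ = −1 and e ≠ 2; = −(yᵣ − yᵣ₊₁)²ε(i) if iᵣ − iᵣ₊₁ = 1 and e = 2; and = ε(i) if iᵣ − iᵣ₊₁ ≠ 0, ±1. -/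
/-!
On `ε(i)` the element `ψᵣ` acts as `θᵣ - c` with `c = δ_{iᵣ,iᵣ₊₁}/(yᵣ - yᵣ₊₁)`, and it acts by
the same expression on `ε(σᵣ i)` because the Kronecker delta is symmetric. Since `σᵣ` negates
`1/(yᵣ - yᵣ₊₁)`, `c` anticommutes with `θᵣ`, so the cross terms of `(θᵣ - c)²` cancel and
`ψᵣ²ε(i) = (θᵣ² + c²)ε(i)`. For `iᵣ = iᵣ₊₁` the term `c² = (yᵣ - yᵣ₊₁)⁻²` cancels `θᵣ²ε(i)`;
otherwise `c = 0` and the formula is that of `θᵣ²ε(i)`.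
-/

open MvPolynomial

/-- The residue `d ∈ ℤ/eℤ` interpreted in `k` (where `e = char k`). -/
noncomputable def resCast (k : Type*) [Field k] (n e : ℕ) [CharP k e] (d : ZMod e) :
    RatFn k n :=
  algebraMap k (RatFn k n) (ZMod.castHom (dvd_refl e) k d)

/-- The Brundan–Kleshchev rational functions `Qᵣ(i) ∈ k(y)` (degenerate case), written in
the variables `y` of the rational function field, for the pair of positions `a = r`,
`b = r+1` and the tuple `i ∈ Iⁿ`, `I = ℤ/eℤ`, `e = char k`. -/
noncomputable def QBK (k : Type*) [Field k] (n e : ℕ) [CharP k e] (a b : Fin n)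
    (i : Fin n → ZMod e) : RatFn k n :=
  if i a - i b = 0 then 1 + RatFn.Xv k n b - RatFn.Xv k n a
  else if i a - i b = 1 ∧ e ≠ 2 then 1
  else if i a - i b = -1 ∧ e ≠ 2 then
    (2 + RatFn.Xv k n b - RatFn.Xv k n a) / (1 + RatFn.Xv k n b - RatFn.Xv k n a) ^ 2
  else if i a - i b = 1 ∧ e = 2 then 1 / (1 + RatFn.Xv k n b - RatFn.Xv k n a)
  else 1 - 1 / (RatFn.Xv k n a - RatFn.Xv k n b + resCast k n e (i a - i b))

namespace RatFn

theorem act_Xv_s16 (k : Type*) [Field k] (n : ℕ) (σ : Equiv.Perm (Fin n)) (s : Fin n) :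
    act k n σ (Xv k n s) = Xv k n (σ s) := by
  rw [act, Xv, IsFractionRing.ringEquivOfRingEquiv_algebraMap]
  simp [Xv]

theorem act_swap_one_div_Xv_sub (k : Type*) [Field k] (n : ℕ) (a b : Fin n) :
    act k n (Equiv.swap a b) (1 / (Xv k n a - Xv k n b)) = -(1 / (Xv k n a - Xv k n b)) := by
  rw [map_div₀, map_one, map_sub, act_Xv_s16, act_Xv_s16, Equiv.swap_apply_left,
    Equiv.swap_apply_right, ← neg_sub, one_div_neg_eq_neg_one_div]

end RatFn

theorem Finset.sum_mul_mul_of_orthogonal {ι A : Type*} [Ring A] [DecidableEq ι] {ε : ι → A}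
    (horth : ∀ i i', ε i * ε i' = if i = i' then ε i else 0)
    (C : Finset ι) (f : ι → A) {i : ι} (hi : i ∈ C) :
    (∑ x ∈ C, f x * ε x) * ε i = f i * ε i := by
  rw [Finset.sum_mul, Finset.sum_eq_single_of_mem i hi]
  · rw [mul_assoc, horth, if_pos rfl]
  · intro x _ hx
    rw [mul_assoc, horth, if_neg hx, mul_zero]

theorem mul_self_mul_of_anticomm {A : Type*} [Ring A] {ψ X c E E' : A}
    (hXE : X * E = E' * X) (hψE : ψ * E = (X - c) * E) (hψE' : ψ * E' = (X - c) * E')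
    (hcX : c * X = -(X * c)) (hcE : c * E = E * c) :
    ψ * ψ * E = (X * X + c * c) * E := by
  have hψXE : ψ * (X * E) = (X - c) * (X * E) := by
    rw [hXE, ← mul_assoc, hψE', mul_assoc]
  have hψcE : ψ * (c * E) = (X - c) * (c * E) := by
    rw [hcE, ← mul_assoc, hψE, mul_assoc]
  calc ψ * ψ * E = ψ * (X * E) - ψ * (c * E) := by rw [mul_assoc, hψE, sub_mul, mul_sub]
    _ = (X * X - (X * c + c * X) + c * c) * E := by rw [hψXE, hψcE]; noncomm_ring
    _ = (X * X + c * c) * E := by rw [hcX, add_neg_cancel, sub_zero]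

section Psi

variable {k : Type*} [Field k] {n e : ℕ} {A : Type*} [Ring A] {j : RatFn k n →+* A}
  {C : Finset (Fin n → ZMod e)} {ε : (Fin n → ZMod e) → A} {a b : Fin n} {θ : A}

open RatFn

noncomputable def psi (j : RatFn k n →+* A) (C : Finset (Fin n → ZMod e))
    (ε : (Fin n → ZMod e) → A) (θ : A) (a b : Fin n) : A :=
  ∑ i ∈ C, (θ - if i a = i b then j (1 / (Xv k n a - Xv k n b)) else 0) * ε i

theorem psi_mul_eps (horth : ∀ i i', ε i * ε i' = if i = i' then ε i else 0)
    {i : Fin n → ZMod e} (hi : i ∈ C) :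
    psi j C ε θ a b * ε i = (θ - if i a = i b then j (1 / (Xv k n a - Xv k n b)) else 0) * ε i :=
  Finset.sum_mul_mul_of_orthogonal horth C _ hi

theorem psi_mul_psi_mul_eps
    (horth : ∀ i i', ε i * ε i' = if i = i' then ε i else 0)
    (hcomm : ∀ (f : RatFn k n) (i), j f * ε i = ε i * j f)
    (hC : ∀ i ∈ C, (fun s => i (Equiv.swap a b s)) ∈ C)
    (hθε : ∀ i, θ * ε i = ε (fun s => i (Equiv.swap a b s)) * θ)
    (hfθ : ∀ f, j f * θ = θ * j (act k n (Equiv.swap a b) f))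
    {i : Fin n → ZMod e} (hi : i ∈ C) :
    psi j C ε θ a b * psi j C ε θ a b * ε i
      = (θ * θ + (if i a = i b then j (1 / (Xv k n a - Xv k n b) ^ 2) else 0)) * ε i := by
  have hψ_swap := psi_mul_eps (j := j) (θ := θ) (a := a) (b := b) horth (hC i hi)
  simp only [Equiv.swap_apply_left, Equiv.swap_apply_right] at hψ_swap
  by_cases hab : i a = i b
  · have hcX : j (1 / (Xv k n a - Xv k n b)) * θ = -(θ * j (1 / (Xv k n a - Xv k n b))) := by
      rw [hfθ, act_swap_one_div_Xv_sub, map_neg, mul_neg]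
    rw [if_pos hab, ← one_div_pow, sq, map_mul]
    refine mul_self_mul_of_anticomm (hθε i) ?_ ?_ hcX (hcomm _ i)
    · rw [psi_mul_eps horth hi, if_pos hab]
    · rw [hψ_swap, if_pos hab.symm]
  · rw [if_neg hab, add_zero]
    refine (mul_self_mul_of_anticomm (c := 0) (hθε i) ?_ ?_ (by simp) (by simp)).trans (by simp)
    · rw [psi_mul_eps horth hi, if_neg hab]
    · rw [hψ_swap, if_neg (Ne.symm hab)]

end Psi

open RatFn in
theorem psi_square_general (k : Type*) [Field k] (n e : ℕ) [CharP k e]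
    (A : Type*) [Ring A] (j : RatFn k n →+* A)
    (C : Finset (Fin n → ZMod e)) (ε : (Fin n → ZMod e) → A) (θ : ℕ → A)
    (horth : ∀ i i', ε i * ε i' = if i = i' then ε i else 0)
    (hcomm : ∀ (f : RatFn k n) (i), j f * ε i = ε i * j f)
    (hC : ∀ (r : ℕ) (hr : r + 1 < n), ∀ i ∈ C,
      (fun s => i (Equiv.swap ⟨r, Nat.lt_of_succ_lt hr⟩ ⟨r + 1, hr⟩ s)) ∈ C)
    (hθε : ∀ (r : ℕ) (hr : r + 1 < n) (i : Fin n → ZMod e),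
      θ r * ε i = ε (fun s => i (Equiv.swap ⟨r, Nat.lt_of_succ_lt hr⟩ ⟨r + 1, hr⟩ s)) * θ r)
    (hfθ : ∀ (r : ℕ) (hr : r + 1 < n) (f : RatFn k n),
      j f * θ r = θ r * j (act k n (Equiv.swap ⟨r, Nat.lt_of_succ_lt hr⟩ ⟨r + 1, hr⟩) f))
    (hθ2 : ∀ (r : ℕ) (hr : r + 1 < n), ∀ i ∈ C,
      θ r * θ r * ε i
        = if i ⟨r, Nat.lt_of_succ_lt hr⟩ - i ⟨r + 1, hr⟩ = 0 then
            j (-(1 / (Xv k n ⟨r + 1, hr⟩ - Xv k n ⟨r, Nat.lt_of_succ_lt hr⟩) ^ 2)) * ε i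
          else if i ⟨r, Nat.lt_of_succ_lt hr⟩ - i ⟨r + 1, hr⟩ = 1 ∧ e ≠ 2 then
            j (Xv k n ⟨r, Nat.lt_of_succ_lt hr⟩ - Xv k n ⟨r + 1, hr⟩) * ε i
          else if i ⟨r, Nat.lt_of_succ_lt hr⟩ - i ⟨r + 1, hr⟩ = -1 ∧ e ≠ 2 then
            j (Xv k n ⟨r + 1, hr⟩ - Xv k n ⟨r, Nat.lt_of_succ_lt hr⟩) * ε i
          else if i ⟨r, Nat.lt_of_succ_lt hr⟩ - i ⟨r + 1, hr⟩ = 1 ∧ e = 2 then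
            j ((Xv k n ⟨r, Nat.lt_of_succ_lt hr⟩ - Xv k n ⟨r + 1, hr⟩)
                * (Xv k n ⟨r + 1, hr⟩ - Xv k n ⟨r, Nat.lt_of_succ_lt hr⟩)) * ε i
          else ε i) :
    ∀ (r : ℕ) (hr : r + 1 < n),
      let a : Fin n := ⟨r, Nat.lt_of_succ_lt hr⟩
      let b : Fin n := ⟨r + 1, hr⟩
      let ψ : A := ∑ i ∈ C,
        (θ r - if i a = i b then j (1 / (Xv k n a - Xv k n b)) else 0) * ε i
      ∀ i ∈ C,
        ψ * ψ * ε i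
          = if i a - i b = 0 then 0
            else if i a - i b = 1 ∧ e ≠ 2 then j (Xv k n a - Xv k n b) * ε i
            else if i a - i b = -1 ∧ e ≠ 2 then j (Xv k n b - Xv k n a) * ε i
            else if i a - i b = 1 ∧ e = 2 then -(j ((Xv k n a - Xv k n b) ^ 2)) * ε i
            else ε i := by
  intro r hr a b ψ i hi
  refine (psi_mul_psi_mul_eps horth hcomm (hC r hr) (hθε r hr) (hfθ r hr) hi).trans ?_
  rw [add_mul, hθ2 r hr i hi]
  by_cases hab : i a = i b
  · have hab' : i a - i b = 0 := sub_eq_zero_of_eq hab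
    rw [if_pos hab', if_pos hab', if_pos hab, ← add_mul, ← map_add, ← neg_sub, neg_sq,
      neg_add_cancel, map_zero, zero_mul]
  · have hab' : i a - i b ≠ 0 := sub_ne_zero_of_ne hab
    rw [if_neg hab, if_neg hab', if_neg hab', zero_mul, add_zero]
    split_ifs
    · rfl
    · rfl
    · rw [← neg_sub (Xv k n a), mul_neg, ← sq, map_neg, neg_mul]
    · rfl

open RatFn in
/-- In the Lusztig extension `L`, with `ψᵣ = Σ_{i∈C}[θᵣ - δ_{iᵣ,iᵣ₊₁}/(yᵣ - yᵣ₊₁)]ε(i)`,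
the square `ψᵣ²ε(i)` is given by the KLR case formula.  The model is any ring containing
`k(y)` (via `j`), orthogonal idempotents `ε(i)`, `i ∈ C`, commuting with `k(y)`, and
elements `θᵣ` satisfying `θᵣε(i) = ε(σᵣ(i))θᵣ`, `fθᵣ = θᵣσᵣ(f)` and the case formula
for `θᵣ²ε(i)`. -/
theorem psi_square (k : Type*) [Field k] (n e : ℕ) [CharP k e]
    (A : Type*) [Ring A] (j : RatFn k n →+* A)
    (C : Finset (Fin n → ZMod e)) (ε : (Fin n → ZMod e) → A) (θ : ℕ → A)
    (horth : ∀ i i', ε i * ε i' = if i = i' then ε i else 0)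
    (hsum : ∑ i ∈ C, ε i = 1)
    (hcomm : ∀ (f : RatFn k n) (i), j f * ε i = ε i * j f)
    (hC : ∀ (r : ℕ) (hr : r + 1 < n), ∀ i ∈ C,
      (fun s => i (Equiv.swap ⟨r, Nat.lt_of_succ_lt hr⟩ ⟨r + 1, hr⟩ s)) ∈ C)
    (hθε : ∀ (r : ℕ) (hr : r + 1 < n) (i : Fin n → ZMod e),
      θ r * ε i = ε (fun s => i (Equiv.swap ⟨r, Nat.lt_of_succ_lt hr⟩ ⟨r + 1, hr⟩ s)) * θ r)
    (hfθ : ∀ (r : ℕ) (hr : r + 1 < n) (f : RatFn k n),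
      j f * θ r = θ r * j (act k n (Equiv.swap ⟨r, Nat.lt_of_succ_lt hr⟩ ⟨r + 1, hr⟩) f))
    (hθ2 : ∀ (r : ℕ) (hr : r + 1 < n), ∀ i ∈ C,
      θ r * θ r * ε i
        = if i ⟨r, Nat.lt_of_succ_lt hr⟩ - i ⟨r + 1, hr⟩ = 0 then
            j (-(1 / (Xv k n ⟨r + 1, hr⟩ - Xv k n ⟨r, Nat.lt_of_succ_lt hr⟩) ^ 2)) * ε i
          else if i ⟨r, Nat.lt_of_succ_lt hr⟩ - i ⟨r + 1, hr⟩ = 1 ∧ e ≠ 2 then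
            j (Xv k n ⟨r, Nat.lt_of_succ_lt hr⟩ - Xv k n ⟨r + 1, hr⟩) * ε i
          else if i ⟨r, Nat.lt_of_succ_lt hr⟩ - i ⟨r + 1, hr⟩ = -1 ∧ e ≠ 2 then
            j (Xv k n ⟨r + 1, hr⟩ - Xv k n ⟨r, Nat.lt_of_succ_lt hr⟩) * ε i
          else if i ⟨r, Nat.lt_of_succ_lt hr⟩ - i ⟨r + 1, hr⟩ = 1 ∧ e = 2 then
            j ((Xv k n ⟨r, Nat.lt_of_succ_lt hr⟩ - Xv k n ⟨r + 1, hr⟩)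
                * (Xv k n ⟨r + 1, hr⟩ - Xv k n ⟨r, Nat.lt_of_succ_lt hr⟩)) * ε i
          else ε i) :
    ∀ (r : ℕ) (hr : r + 1 < n),
      let a : Fin n := ⟨r, Nat.lt_of_succ_lt hr⟩
      let b : Fin n := ⟨r + 1, hr⟩
      let ψ : A := ∑ i ∈ C,
        (θ r - if i a = i b then j (1 / (Xv k n a - Xv k n b)) else 0) * ε i
      ∀ i ∈ C,
        ψ * ψ * ε i
          = if i a - i b = 0 then 0
            else if i a - i b = 1 ∧ e ≠ 2 then j (Xv k n a - Xv k n b) * ε i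
            else if i a - i b = -1 ∧ e ≠ 2 then j (Xv k n b - Xv k n a) * ε i
            else if i a - i b = 1 ∧ e = 2 then -(j ((Xv k n a - Xv k n b) ^ 2)) * ε i
            else ε i :=
  psi_square_general k n e A j C ε θ horth hcomm hC hθε hfθ hθ2
end

section
/- In the cyclotomic degenerate affine Hecke algebra H(Λ), for 1 ≤ r < n and i ∈ Iⁿ: if iᵣ = iᵣ₊₁ then Tᵣ e(i) = e(i) Tᵣ, and if iᵣ ≠ iᵣ₊₁ then Tᵣ e(i) = e(σᵣ(i)) Tᵣ + (Xᵣ − Xᵣ₊₁)^{−1}(e(σᵣ(i)) − e(i)), where (Xᵣ − Xᵣ₊₁)^{−1} denotes the inverse of (Xᵣ − Xᵣ₊₁) on the relevant generalized eigenspaces. -/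
section aux
variable {A : Type*} [Ring A]

/-- If `w^p * h = 0` and `(w+d)^m * h = 0` with `d` a unit commuting with `w`, then `h = 0`. -/
lemma annA (w d : A) (hcomm : Commute w d) (hd : IsUnit d) :
    ∀ (p m : ℕ) (h : A), w ^ p * h = 0 → (w + d) ^ m * h = 0 → h = 0 := by
  have key : ∀ (m : ℕ) (h : A), w * h = 0 → (w + d) ^ m * h = d ^ m * h := by
    intro m
    induction m with
    | zero => intro h _; simp
    | succ m ih =>
      intro h hw
      rw [pow_succ, mul_assoc, add_mul, hw, zero_add,
        ih (d * h) (by rw [← mul_assoc, hcomm.eq, mul_assoc, hw, mul_zero]),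
        ← mul_assoc, ← pow_succ]
  intro p
  induction p with
  | zero => intro m h h1 _; simpa using h1
  | succ p ih =>
    intro m h h1 h2
    have hwh : w * h = 0 := by
      refine ih m (w * h) (by rw [← mul_assoc, ← pow_succ]; exact h1) ?_
      have hcw : (w + d) ^ m * w = w * (w + d) ^ m :=
        (((Commute.refl w).add_right hcomm).symm.pow_left m).eq
      rw [← mul_assoc, hcw, mul_assoc, h2, mul_zero]
    have h3 : d ^ m * h = 0 := by rw [← key m h hwh]; exact h2
    obtain ⟨u, hu⟩ := hd.pow m
    calc h = ↑u⁻¹ * (↑u * h) := by rw [← mul_assoc]; simp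
    _ = 0 := by rw [hu, h3, mul_zero]

/-- Sum of two commuting "nilpotent on h" elements is nilpotent on h. -/
lemma nilsumA (u v h : A) (huv : Commute u v) (p q : ℕ)
    (hu : u ^ p * h = 0) (hv : v ^ q * h = 0) : (u + v) ^ (p + q) * h = 0 := by
  rw [huv.add_pow, Finset.sum_mul]
  apply Finset.sum_eq_zero
  intro j hj
  by_cases hjp : p ≤ j
  · have h1 : u ^ j * h = 0 := by
      rw [show u ^ j = u ^ (j - p) * u ^ p by rw [← pow_add]; congr 1; omega,
        mul_assoc, hu, mul_zero]
    calc u ^ j * v ^ (p + q - j) * ((p + q).choose j : A) * h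
        = v ^ (p + q - j) * ((p + q).choose j : A) * (u ^ j * h) := by
          rw [(huv.pow_pow j (p + q - j)).eq]
          rw [mul_assoc (v ^ (p+q-j)), (Nat.cast_commute ((p+q).choose j) (u ^ j)).eq.symm]
          rw [mul_assoc, mul_assoc, mul_assoc]
    _ = 0 := by rw [h1, mul_zero]
  · have hq : q ≤ p + q - j := by omega
    have h1 : v ^ (p + q - j) * h = 0 := by
      rw [show v ^ (p+q-j) = v ^ (p + q - j - q) * v ^ q by rw [← pow_add]; congr 1; omega,
        mul_assoc, hv, mul_zero]
    calc u ^ j * v ^ (p + q - j) * ((p + q).choose j : A) * h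
        = u ^ j * ((p + q).choose j : A) * (v ^ (p + q - j) * h) := by
          rw [mul_assoc (u ^ j), (Nat.cast_commute ((p+q).choose j) (v ^ (p+q-j))).eq.symm]
          rw [mul_assoc, mul_assoc, mul_assoc]
    _ = 0 := by rw [h1, mul_zero]

end aux

section corner
variable {k : Type*} [Field k] {A : Type*} [Ring A] [Algebra k A]

/-- Corner inverse of `G` on the idempotent `E`, when `G - d` is nilpotent on `E`. -/
lemma cornerInvA (E G : A) (d : k) (hd : d ≠ 0) (hE : E * E = E)
    (hcomm : E * G = G * E)
    (hnil : ∃ m, (G - algebraMap k A d) ^ m * E = 0) :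
    ∃ c, c * G = E ∧ E * c = c ∧ c * E = c := by
  set D := G - algebraMap k A d with hD
  have hED : E * D = D * E := by
    simp only [hD, mul_sub, sub_mul, hcomm, Algebra.commutes]
  have hmid : E * (D * E) = D * E := by rw [← mul_assoc, hED, mul_assoc, hE]
  have hNE : D * E * E = D * E := by rw [mul_assoc, hE]
  have hDpow : ∀ t : ℕ, (D * E) ^ (t + 1) = D ^ (t + 1) * E := by
    intro t
    induction t with
    | zero => simp
    | succ t ih =>
      calc (D * E) ^ (t + 1 + 1) = (D * E) ^ (t + 1) * (D * E) := pow_succ _ _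
      _ = D ^ (t + 1) * E * (D * E) := by rw [ih]
      _ = D ^ (t + 1) * (D * E) := by rw [mul_assoc, hmid]
      _ = D ^ (t + 1 + 1) * E := by rw [← mul_assoc, ← pow_succ]
  have hNnil : IsNilpotent (D * E) := by
    obtain ⟨m, hm⟩ := hnil
    exact ⟨m + 1, by rw [hDpow m, pow_succ', mul_assoc, hm, mul_zero]⟩
  have hq : IsUnit (algebraMap k A d) := (hd.isUnit).map (algebraMap k A)
  have hNq : Commute (D * E) (algebraMap k A d) := (Algebra.commutes d (D * E)).symm
  obtain ⟨u, hu⟩ := hNnil.isUnit_add_right_of_commute hq hNq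
  have hEu : Commute E (D * E + algebraMap k A d) := by
    unfold Commute SemiconjBy
    rw [mul_add, add_mul, hmid, hNE, Algebra.commutes]
  have hEV : Commute E (↑u⁻¹ : A) := Commute.units_inv_right (hu ▸ hEu)
  refine ⟨↑u⁻¹ * E, ?_, ?_, ?_⟩
  · have hGE : G * E = (D * E + algebraMap k A d) * E := by
      rw [add_mul, mul_assoc, hE, hD, sub_mul, sub_add_cancel]
    calc ↑u⁻¹ * E * G = ↑u⁻¹ * (G * E) := by rw [mul_assoc, hcomm]
    _ = ↑u⁻¹ * (↑u * E) := by rw [hGE, hu]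
    _ = E := by rw [← mul_assoc]; simp
  · rw [← mul_assoc, hEV.eq, mul_assoc, hE]
  · rw [mul_assoc, hE]

end corner

/-- In the cyclotomic degenerate affine Hecke algebra `H(Λ)` (modelled by any `k`-algebra
generated by commuting `Xᵣ` and elements `Tᵣ` satisfying the degenerate affine Hecke
relations, together with the system of mutually orthogonal idempotents `e(i)`, `i ∈ Iⁿ`,
`I = ℤ/eℤ`, `e = char k`, projecting onto the simultaneous generalized eigenspaces of the
`Xᵣ`): if `iᵣ = iᵣ₊₁` then `Tᵣ e(i) = e(i) Tᵣ`, and if `iᵣ ≠ iᵣ₊₁` then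
`Tᵣ e(i) = e(σᵣ(i)) Tᵣ + (Xᵣ - Xᵣ₊₁)⁻¹ (e(σᵣ(i)) - e(i))`, where `(Xᵣ - Xᵣ₊₁)⁻¹ e(j)`
denotes the inverse of `(Xᵣ - Xᵣ₊₁) e(j)` in the corner `e(j) H(Λ) e(j)`. -/
theorem cyclotomic_degenerate_Te (k : Type*) [Field k] (n e : ℕ) [CharP k e]
    (A : Type*) [Ring A] [Algebra k A]
    (X : Fin n → A) (T : ℕ → A) (eI : (Fin n → ZMod e) → A)
    -- commuting polynomial generators
    (hXcomm : ∀ r s : Fin n, X r * X s = X s * X r)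
    -- the relation Tᵣ Xₛ = σᵣ(Xₛ) Tᵣ + ∂ᵣ(Xₛ)
    (hTX : ∀ (r : ℕ) (hr : r + 1 < n) (s : Fin n),
      T r * X s
        = X (Equiv.swap ⟨r, Nat.lt_of_succ_lt hr⟩ ⟨r + 1, hr⟩ s) * T r
          + (if s = ⟨r, Nat.lt_of_succ_lt hr⟩ then -1
             else if s = ⟨r + 1, hr⟩ then 1 else 0))
    (hT2 : ∀ r : ℕ, r + 1 < n → T r * T r = 1)
    (hTcomm : ∀ r s : ℕ, r + 1 < n → s + 1 < n → r + 1 < s ∨ s + 1 < r →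
      T r * T s = T s * T r)
    (hbraid : ∀ r : ℕ, r + 2 < n → T r * T (r + 1) * T r = T (r + 1) * T r * T (r + 1))
    -- the e(i) are mutually orthogonal idempotents with finite support summing to 1
    (horth : ∀ i i', eI i * eI i' = if i = i' then eI i else 0)
    (S : Finset (Fin n → ZMod e)) (hsupp : ∀ i ∉ S, eI i = 0)
    (hsum : ∑ i ∈ S, eI i = 1)
    -- e(i)·H(Λ) is the simultaneous generalized eigenspace of the Xᵣ with eigenvalues iᵣ
    (hgen : ∀ (i : Fin n → ZMod e) (h : A),
      eI i * h = h ↔ ∀ r : Fin n, ∃ m : ℕ,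
        (X r - algebraMap k A (ZMod.castHom (dvd_refl e) k (i r))) ^ m * h = 0)
    (hgen' : ∀ (i : Fin n → ZMod e) (h : A),
      h * eI i = h ↔ ∀ r : Fin n, ∃ m : ℕ,
        h * (X r - algebraMap k A (ZMod.castHom (dvd_refl e) k (i r))) ^ m = 0) :
    ∀ (r : ℕ) (hr : r + 1 < n) (i : Fin n → ZMod e),
      let a : Fin n := ⟨r, Nat.lt_of_succ_lt hr⟩
      let b : Fin n := ⟨r + 1, hr⟩
      let si : Fin n → ZMod e := fun s => i (Equiv.swap a b s)
      (i a = i b → T r * eI i = eI i * T r)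
      ∧ (i a ≠ i b →
          ∃ c₁ c₂ : A,
            c₁ * (X a - X b) = eI si ∧ eI si * c₁ = c₁ ∧ c₁ * eI si = c₁
            ∧ c₂ * (X a - X b) = eI i ∧ eI i * c₂ = c₂ ∧ c₂ * eI i = c₂
            ∧ T r * eI i = eI si * T r + (c₁ - c₂)) := by
  intro r hr i a b si
  set κ : ZMod e → k := fun v => ZMod.castHom (dvd_refl e) k v with hκdef
  set al : k → A := fun c => algebraMap k A c with haldef
  have hal_sub : ∀ c d : k, al (c - d) = al c - al d := fun c d => map_sub (algebraMap k A) c d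
  have hal_add : ∀ c d : k, al (c + d) = al c + al d := fun c d => map_add (algebraMap k A) c d
  have hal_mul : ∀ c d : k, al (c * d) = al c * al d := fun c d => map_mul (algebraMap k A) c d
  have hinj : Function.Injective κ := ZMod.castHom_injective k
  have cal : ∀ (c : k) (y : A), Commute (al c) y := fun c y => Algebra.commutes c y
  have idem : ∀ j, eI j * eI j = eI j := fun j => by simpa using horth j j
  have orth0 : ∀ j j', j ≠ j' → eI j * eI j' = 0 := fun j j' h => by simpa [h] using horth j j'
  have nilL : ∀ (j : Fin n → ZMod e) (s : Fin n), ∃ m, (X s - al (κ (j s))) ^ m * eI j = 0 :=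
    fun j s => (hgen j (eI j)).mp (idem j) s
  have nilR : ∀ (j : Fin n → ZMod e) (s : Fin n), ∃ m, eI j * (X s - al (κ (j s))) ^ m = 0 :=
    fun j s => (hgen' j (eI j)).mp (idem j) s
  -- e(j) commutes with the X's
  have eXgen : ∀ j s, eI j * (X s * eI j) = X s * eI j := by
    intro j s
    refine (hgen j _).mpr fun t => ?_
    obtain ⟨m, hm⟩ := nilL j t
    refine ⟨m, ?_⟩
    have hc : Commute ((X t - al (κ (j t))) ^ m) (X s) :=
      ((Commute.sub_left (hXcomm t s) (cal (κ (j t)) (X s)))).pow_left m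
    rw [← mul_assoc, hc.eq, mul_assoc, hm, mul_zero]
  have eXgen' : ∀ j s, (eI j * X s) * eI j = eI j * X s := by
    intro j s
    refine (hgen' j _).mpr fun t => ?_
    obtain ⟨m, hm⟩ := nilR j t
    refine ⟨m, ?_⟩
    have hc : Commute (X s) ((X t - al (κ (j t))) ^ m) :=
      ((Commute.sub_right (hXcomm s t) (cal (κ (j t)) (X s)).symm)).pow_right m
    rw [mul_assoc, hc.eq, ← mul_assoc, hm, zero_mul]
  have eX : ∀ j s, eI j * X s = X s * eI j := by
    intro j s
    by_cases hjS : j ∈ S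
    · have h1 : eI j * X s = eI j * X s * eI j := by
        conv_lhs => rw [← mul_one (eI j * X s), ← hsum, Finset.mul_sum]
        rw [Finset.sum_eq_single_of_mem j hjS]
        intro jb _ hbj
        rw [← eXgen' j s, mul_assoc, orth0 j jb (Ne.symm hbj), mul_zero]
      have h2 : X s * eI j = eI j * (X s * eI j) := by
        conv_lhs => rw [← one_mul (X s * eI j), ← hsum, Finset.sum_mul]
        rw [Finset.sum_eq_single_of_mem j hjS]
        intro jb _ hbj
        rw [← eXgen j s, ← mul_assoc, orth0 jb j hbj, zero_mul]
      rw [h1, mul_assoc, ← h2]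
    · rw [hsupp j hjS, zero_mul, mul_zero]
  -- basic T-X relations
  have hconva : (⟨r, Nat.lt_of_succ_lt hr⟩ : Fin n) = a := rfl
  have hconvb : (⟨r + 1, hr⟩ : Fin n) = b := rfl
  have hba : b ≠ a := by
    intro hEq
    have := congrArg Fin.val hEq
    simp [a, b] at this
  have hTXa : T r * X a = X b * T r - 1 := by
    have h := hTX r hr a
    rw [hconva, hconvb, if_pos rfl, Equiv.swap_apply_left] at h
    rw [h]; abel
  have hTXb : T r * X b = X a * T r + 1 := by
    have h := hTX r hr b
    rw [hconva, hconvb, if_neg hba, if_pos rfl, Equiv.swap_apply_right] at h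
    exact h
  have hTsX : ∀ s : Fin n, s ≠ a → s ≠ b → T r * X s = X s * T r := by
    intro s hsa hsb
    have h := hTX r hr s
    rw [hconva, hconvb, if_neg hsa, if_neg hsb, Equiv.swap_apply_of_ne_of_ne hsa hsb,
      add_zero] at h
    exact h
  -- the intertwiner
  set Φ : A := (X a - X b) * T r + 1 with hΦ
  have ΦXa : Φ * X a = X b * Φ := by
    calc Φ * X a = (X a - X b) * (T r * X a) + X a := by rw [hΦ]; noncomm_ring
    _ = (X a - X b) * (X b * T r - 1) + X a := by rw [hTXa]
    _ = (X a * X b) * T r - (X b * X b) * T r + X b := by noncomm_ring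
    _ = (X b * X a) * T r - (X b * X b) * T r + X b := by rw [hXcomm a b]
    _ = X b * Φ := by rw [hΦ]; noncomm_ring
  have ΦXb : Φ * X b = X a * Φ := by
    calc Φ * X b = (X a - X b) * (T r * X b) + X b := by rw [hΦ]; noncomm_ring
    _ = (X a - X b) * (X a * T r + 1) + X b := by rw [hTXb]
    _ = (X a * X a) * T r - (X b * X a) * T r + X a := by noncomm_ring
    _ = (X a * X a) * T r - (X a * X b) * T r + X a := by rw [hXcomm b a]
    _ = X a * Φ := by rw [hΦ]; noncomm_ring
  have ΦXσ : ∀ s : Fin n, Φ * X s = X (Equiv.swap a b s) * Φ := by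
    intro s
    by_cases hsa : s = a
    · subst hsa; rw [Equiv.swap_apply_left]; exact ΦXa
    by_cases hsb : s = b
    · subst hsb; rw [Equiv.swap_apply_right]; exact ΦXb
    rw [Equiv.swap_apply_of_ne_of_ne hsa hsb]
    calc Φ * X s = (X a - X b) * (T r * X s) + X s := by rw [hΦ]; noncomm_ring
    _ = (X a - X b) * (X s * T r) + X s := by rw [hTsX s hsa hsb]
    _ = (X a * X s) * T r - (X b * X s) * T r + X s := by noncomm_ring
    _ = (X s * X a) * T r - (X s * X b) * T r + X s := by rw [hXcomm a s, hXcomm b s]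
    _ = X s * Φ := by rw [hΦ]; noncomm_ring
  have Φpow : ∀ (s : Fin n) (c : k) (m : ℕ),
      Φ * (X s - al c) ^ m = (X (Equiv.swap a b s) - al c) ^ m * Φ := by
    intro s c m
    have h1 : Φ * (X s - al c) = (X (Equiv.swap a b s) - al c) * Φ := by
      rw [mul_sub, sub_mul, ΦXσ s, (cal c Φ).eq]
    induction m with
    | zero => simp
    | succ m ih =>
      rw [pow_succ, ← mul_assoc, ih, mul_assoc, h1, pow_succ, mul_assoc]
  have key : eI si * (Φ * eI i) = Φ * eI i := by
    refine (hgen si _).mpr fun t => ?_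
    obtain ⟨m, hm⟩ := nilL i (Equiv.swap a b t)
    refine ⟨m, ?_⟩
    have hst : si t = i (Equiv.swap a b t) := rfl
    have h2 := Φpow (Equiv.swap a b t) (κ (i (Equiv.swap a b t))) m
    rw [Equiv.swap_apply_self] at h2
    rw [hst, ← mul_assoc, ← h2, mul_assoc, hm, mul_zero]
  have key2 : (eI si * Φ) * eI i = eI si * Φ := by
    refine (hgen' i _).mpr fun t => ?_
    obtain ⟨m, hm⟩ := nilR si (Equiv.swap a b t)
    refine ⟨m, ?_⟩
    have h3 : si (Equiv.swap a b t) = i t := by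
      show i (Equiv.swap a b (Equiv.swap a b t)) = i t
      rw [Equiv.swap_apply_self]
    rw [h3] at hm
    rw [mul_assoc, Φpow t (κ (i t)) m, ← mul_assoc, hm, zero_mul]
  have CI : Φ * eI i = eI si * Φ := by
    calc Φ * eI i = eI si * (Φ * eI i) := key.symm
    _ = (eI si * Φ) * eI i := by rw [mul_assoc]
    _ = eI si * Φ := key2
  have star : (X a - X b) * (T r * eI i - eI si * T r) = eI si - eI i := by
    have h4 : eI si * (X a - X b) = (X a - X b) * eI si := by
      rw [mul_sub, sub_mul, eX si a, eX si b]
    have h5 := CI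
    rw [hΦ] at h5
    calc (X a - X b) * (T r * eI i - eI si * T r)
        = ((X a - X b) * T r + 1) * eI i - eI i - ((X a - X b) * eI si) * T r := by
          noncomm_ring
    _ = eI si * ((X a - X b) * T r + 1) - eI i - (eI si * (X a - X b)) * T r := by
          rw [h5, h4]
    _ = eI si - eI i := by noncomm_ring
  -- the block lemma
  have blockL : ∀ i' j : Fin n → ZMod e, j ≠ i' → j ≠ (fun s => i' (Equiv.swap a b s)) →
      eI j * (T r * eI i') = 0 := by
    intro i' j hji hjsi
    set h : A := eI j * (T r * eI i') with hh
    have heIh : eI j * h = h := by rw [hh, ← mul_assoc, idem]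
    have hj := (hgen j h).mp heIh
    have transfer : ∀ Y : A, eI j * Y = Y * eI j → T r * Y = Y * T r →
        ∀ (c : k) (q : ℕ), (Y - al c) ^ q * eI i' = 0 → (Y - al c) ^ q * h = 0 := by
      intro Y hYe hYT c q hq
      have c1 : Commute ((Y - al c) ^ q) (eI j) :=
        (Commute.sub_left (show Commute Y (eI j) from hYe.symm) (cal c (eI j))).pow_left q
      have c2 : Commute ((Y - al c) ^ q) (T r) :=
        (Commute.sub_left (show Commute Y (T r) from hYT.symm) (cal c (T r))).pow_left q
      have hin : (Y - al c) ^ q * (T r * eI i') = 0 := by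
        rw [← mul_assoc, c2.eq, mul_assoc, hq, mul_zero]
      rw [hh, ← mul_assoc, c1.eq, mul_assoc, hin, mul_zero]
    by_cases hex : ∃ s : Fin n, s ≠ a ∧ s ≠ b ∧ j s ≠ i' s
    · obtain ⟨s, hsa, hsb, hne⟩ := hex
      obtain ⟨p, hp⟩ := hj s
      obtain ⟨q, hq0⟩ := nilL i' s
      have hq := transfer (X s) (eX j s) (hTsX s hsa hsb) (κ (i' s)) q hq0
      have hdne : κ (j s) - κ (i' s) ≠ 0 := sub_ne_zero.mpr fun hEq => hne (hinj hEq)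
      refine annA (X s - al (κ (j s))) (al (κ (j s) - κ (i' s)))
        ((cal _ _).symm) (hdne.isUnit.map (algebraMap k A)) p q h hp ?_
      have heq : X s - al (κ (j s)) + al (κ (j s) - κ (i' s)) = X s - al (κ (i' s)) := by
        rw [hal_sub]; abel
      rw [heq]
      exact hq
    · push_neg at hex
      -- per-coordinate nilpotency for sums and products
      have nils1 : ∀ (jj : Fin n → ZMod e) (z : A),
          (∀ t, ∃ m, (X t - al (κ (jj t))) ^ m * z = 0) →
          ∃ m, ((X a + X b) - al (κ (jj a) + κ (jj b))) ^ m * z = 0 := by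
        intro jj z hz
        obtain ⟨p, hp⟩ := hz a
        obtain ⟨q, hq⟩ := hz b
        refine ⟨p + q, ?_⟩
        have hc : Commute (X a - al (κ (jj a))) (X b - al (κ (jj b))) :=
          Commute.sub_left
            (Commute.sub_right (hXcomm a b) (cal (κ (jj b)) (X a)).symm)
            (cal (κ (jj a)) _)
        have hres := nilsumA _ _ z hc p q hp hq
        have heq : (X a - al (κ (jj a))) + (X b - al (κ (jj b)))
            = (X a + X b) - al (κ (jj a) + κ (jj b)) := by
          rw [hal_add]; abel
        rw [heq] at hres
        exact hres
      have nils2 : ∀ (jj : Fin n → ZMod e) (z : A),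
          (∀ t, ∃ m, (X t - al (κ (jj t))) ^ m * z = 0) →
          ∃ m, ((X a * X b) - al (κ (jj a) * κ (jj b))) ^ m * z = 0 := by
        intro jj z hz
        obtain ⟨p, hp⟩ := hz a
        obtain ⟨q, hq⟩ := hz b
        refine ⟨p + q, ?_⟩
        have hcab : Commute (X a - al (κ (jj a))) (X b) :=
          Commute.sub_left (hXcomm a b) (cal (κ (jj a)) (X b))
        have hcbb : Commute (X b - al (κ (jj b))) (X b) :=
          Commute.sub_left (hXcomm b b) (cal (κ (jj b)) (X b))
        have hcuv : Commute ((X a - al (κ (jj a))) * X b)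
            (al (κ (jj a)) * (X b - al (κ (jj b)))) := by
          refine Commute.mul_left (Commute.mul_right ?_ ?_) (Commute.mul_right ?_ ?_)
          · exact (cal (κ (jj a)) _).symm
          · exact Commute.sub_right
              (Commute.sub_left (hXcomm a b) (cal (κ (jj a)) (X b)))
              (cal (κ (jj b)) _).symm
          · exact (cal (κ (jj a)) _).symm
          · exact hcbb.symm
        have hup : ((X a - al (κ (jj a))) * X b) ^ p * z = 0 := by
          rw [hcab.mul_pow, (hcab.pow_pow p p).eq, mul_assoc, hp, mul_zero]
        have hvq : (al (κ (jj a)) * (X b - al (κ (jj b)))) ^ q * z = 0 := by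
          rw [((cal (κ (jj a)) (X b - al (κ (jj b))))).mul_pow, mul_assoc, hq, mul_zero]
        have hres := nilsumA _ _ z hcuv p q hup hvq
        have heq : (X a - al (κ (jj a))) * X b + al (κ (jj a)) * (X b - al (κ (jj b)))
            = (X a * X b) - al (κ (jj a) * κ (jj b)) := by
          rw [hal_mul]; noncomm_ring
        rw [heq] at hres
        exact hres
      -- T commutes with X a + X b and X a * X b
      have hTs1 : T r * (X a + X b) = (X a + X b) * T r := by
        rw [mul_add, hTXa, hTXb]; noncomm_ring
      have hTs2 : T r * (X a * X b) = (X a * X b) * T r := by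
        calc T r * (X a * X b) = (X b * T r - 1) * X b := by rw [← mul_assoc, hTXa]
        _ = X b * (T r * X b) - X b := by noncomm_ring
        _ = X b * (X a * T r + 1) - X b := by rw [hTXb]
        _ = (X b * X a) * T r := by noncomm_ring
        _ = (X a * X b) * T r := by rw [hXcomm b a]
      have heIs1 : eI j * (X a + X b) = (X a + X b) * eI j := by
        rw [mul_add, add_mul, eX, eX]
      have heIs2 : eI j * (X a * X b) = (X a * X b) * eI j := by
        rw [← mul_assoc, eX, mul_assoc, eX, ← mul_assoc]
      -- the sums or the products of eigenvalues must differ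
      have hsum_or : κ (j a) + κ (j b) ≠ κ (i' a) + κ (i' b)
          ∨ κ (j a) * κ (j b) ≠ κ (i' a) * κ (i' b) := by
        by_contra hcon
        push_neg at hcon
        obtain ⟨h1, h2⟩ := hcon
        have hz : (κ (j a) - κ (i' a)) * (κ (j a) - κ (i' b)) = 0 := by
          linear_combination κ (j a) * h1 - h2
        have : j = i' ∨ j = fun s => i' (Equiv.swap a b s) := by
          rcases mul_eq_zero.mp hz with h3 | h3
          · left
            have hga : j a = i' a := hinj (sub_eq_zero.mp h3)
            have hdb : j b = i' b := hinj (by linear_combination h1 - h3)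
            funext s
            by_cases hsa : s = a
            · rw [hsa]; exact hga
            by_cases hsb : s = b
            · rw [hsb]; exact hdb
            exact hex s hsa hsb
          · right
            have hga : j a = i' b := hinj (sub_eq_zero.mp h3)
            have hdb : j b = i' a := hinj (by linear_combination h1 - h3)
            funext s
            by_cases hsa : s = a
            · rw [hsa, Equiv.swap_apply_left]; exact hga
            by_cases hsb : s = b
            · rw [hsb, Equiv.swap_apply_right]; exact hdb
            rw [Equiv.swap_apply_of_ne_of_ne hsa hsb]
            exact hex s hsa hsb
        rcases this with hEq | hEq
        · exact hji hEq
        · exact hjsi hEq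
      rcases hsum_or with hne | hne
      · obtain ⟨p, hp⟩ := nils1 j h hj
        obtain ⟨q, hq0⟩ := nils1 i' (eI i') (nilL i')
        have hq := transfer (X a + X b) heIs1 hTs1 (κ (i' a) + κ (i' b)) q hq0
        have hdne : (κ (j a) + κ (j b)) - (κ (i' a) + κ (i' b)) ≠ 0 :=
          sub_ne_zero.mpr hne
        refine annA ((X a + X b) - al (κ (j a) + κ (j b)))
          (al ((κ (j a) + κ (j b)) - (κ (i' a) + κ (i' b))))
          ((cal _ _).symm) (hdne.isUnit.map (algebraMap k A)) p q h hp ?_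
        have heq : (X a + X b) - al (κ (j a) + κ (j b))
            + al ((κ (j a) + κ (j b)) - (κ (i' a) + κ (i' b)))
            = (X a + X b) - al (κ (i' a) + κ (i' b)) := by
          rw [hal_sub]; abel
        rw [heq]
        exact hq
      · obtain ⟨p, hp⟩ := nils2 j h hj
        obtain ⟨q, hq0⟩ := nils2 i' (eI i') (nilL i')
        have hq := transfer (X a * X b) heIs2 hTs2 (κ (i' a) * κ (i' b)) q hq0
        have hdne : (κ (j a) * κ (j b)) - (κ (i' a) * κ (i' b)) ≠ 0 :=
          sub_ne_zero.mpr hne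
        refine annA ((X a * X b) - al (κ (j a) * κ (j b)))
          (al ((κ (j a) * κ (j b)) - (κ (i' a) * κ (i' b))))
          ((cal _ _).symm) (hdne.isUnit.map (algebraMap k A)) p q h hp ?_
        have heq : (X a * X b) - al (κ (j a) * κ (j b))
            + al ((κ (j a) * κ (j b)) - (κ (i' a) * κ (i' b)))
            = (X a * X b) - al (κ (i' a) * κ (i' b)) := by
          rw [hal_sub]; abel
        rw [heq]
        exact hq
  have hsia : si a = i b := by
    show i (Equiv.swap a b a) = i b
    rw [Equiv.swap_apply_left]
  have hsib : si b = i a := by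
    show i (Equiv.swap a b b) = i a
    rw [Equiv.swap_apply_right]
  constructor
  · -- case i a = i b
    intro hab
    have hsieq : si = i := by
      funext s
      by_cases hsa : s = a
      · rw [hsa, hsia]; exact hab.symm
      by_cases hsb : s = b
      · rw [hsb, hsib]; exact hab
      show i (Equiv.swap a b s) = i s
      rw [Equiv.swap_apply_of_ne_of_ne hsa hsb]
    by_cases hiS : i ∈ S
    · have hL : T r * eI i = eI i * (T r * eI i) := by
        conv_lhs => rw [← one_mul (T r * eI i), ← hsum, Finset.sum_mul]
        rw [Finset.sum_eq_single_of_mem i hiS]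
        intro j _ hjne
        apply blockL i j hjne
        show j ≠ si
        rw [hsieq]
        exact hjne
      have hR : eI i * T r = eI i * (T r * eI i) := by
        conv_lhs => rw [← mul_one (eI i * T r), ← hsum, Finset.mul_sum]
        rw [Finset.sum_eq_single_of_mem i hiS, mul_assoc]
        intro j _ hjne
        rw [mul_assoc]
        apply blockL j i (Ne.symm hjne)
        intro hcon
        apply hjne
        funext s
        have h1 := congrFun hcon (Equiv.swap a b s)
        rw [Equiv.swap_apply_self] at h1
        have h2 : i (Equiv.swap a b s) = i s := by
          rw [show i (Equiv.swap a b s) = si s from rfl, hsieq]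
        rw [← h1, h2]
      rw [hL, hR]
    · rw [hsupp i hiS, mul_zero, zero_mul]
  · -- case i a ≠ i b
    intro hab
    have hine : i ≠ si := by
      intro hEq
      exact hab ((congrFun hEq a).trans hsia)
    have hd0 : κ (i a) - κ (i b) ≠ 0 := sub_ne_zero.mpr fun hEq => hab (hinj hEq)
    have hd0' : κ (i b) - κ (i a) ≠ 0 := sub_ne_zero.mpr fun hEq => hab (hinj hEq).symm
    have mkc : ∀ j : Fin n → ZMod e, κ (j a) - κ (j b) ≠ 0 →
        ∃ c, c * (X a - X b) = eI j ∧ eI j * c = c ∧ c * eI j = c := by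
      intro j hdj
      refine cornerInvA (eI j) (X a - X b) (κ (j a) - κ (j b)) hdj (idem j)
        (by rw [mul_sub, sub_mul, eX, eX]) ?_
      obtain ⟨p, hp⟩ := nilL j a
      obtain ⟨q, hq⟩ := nilL j b
      refine ⟨p + q, ?_⟩
      have hc : Commute (X a - al (κ (j a))) (-(X b - al (κ (j b)))) :=
        (Commute.sub_left
          (Commute.sub_right (hXcomm a b) (cal (κ (j b)) (X a)).symm)
          (cal (κ (j a)) _)).neg_right
      have hq' : (-(X b - al (κ (j b)))) ^ q * eI j = 0 := by
        rw [neg_pow, mul_assoc, hq, mul_zero]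
      have hres := nilsumA _ _ (eI j) hc p q hp hq'
      have heq : (X a - al (κ (j a))) + -(X b - al (κ (j b)))
          = (X a - X b) - al (κ (j a) - κ (j b)) := by
        rw [hal_sub]; abel
      rw [heq] at hres
      exact hres
    obtain ⟨c₂, hc2G, hc2E, hc2E'⟩ := mkc i hd0
    obtain ⟨c₁, hc1G, hc1E, hc1E'⟩ := mkc si (by rw [hsia, hsib]; exact hd0')
    refine ⟨c₁, c₂, hc1G, hc1E, hc1E', hc2G, hc2E, hc2E', ?_⟩
    have hc1i : c₁ * eI i = 0 := by
      rw [← hc1E', mul_assoc, orth0 si i (Ne.symm hine), mul_zero]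
    have hc2si : c₂ * eI si = 0 := by
      rw [← hc2E', mul_assoc, orth0 i si hine, mul_zero]
    have hZsi : eI si * (T r * eI i - eI si * T r) = c₁ := by
      calc eI si * (T r * eI i - eI si * T r)
          = (c₁ * (X a - X b)) * (T r * eI i - eI si * T r) := by rw [hc1G]
      _ = c₁ * ((X a - X b) * (T r * eI i - eI si * T r)) := by rw [mul_assoc]
      _ = c₁ * (eI si - eI i) := by rw [star]
      _ = c₁ * eI si - c₁ * eI i := by rw [mul_sub]
      _ = c₁ := by rw [hc1E', hc1i, sub_zero]
    have hZi : eI i * (T r * eI i - eI si * T r) = -c₂ := by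
      calc eI i * (T r * eI i - eI si * T r)
          = (c₂ * (X a - X b)) * (T r * eI i - eI si * T r) := by rw [hc2G]
      _ = c₂ * ((X a - X b) * (T r * eI i - eI si * T r)) := by rw [mul_assoc]
      _ = c₂ * (eI si - eI i) := by rw [star]
      _ = c₂ * eI si - c₂ * eI i := by rw [mul_sub]
      _ = -c₂ := by rw [hc2si, hc2E', zero_sub]
    have hZj : ∀ j, j ≠ i → j ≠ si → eI j * (T r * eI i - eI si * T r) = 0 := by
      intro j h1 h2
      rw [mul_sub, ← mul_assoc (eI j) (eI si) (T r), orth0 j si h2, zero_mul, sub_zero]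
      exact blockL i j h1 h2
    have hZsum : T r * eI i - eI si * T r
        = ∑ j ∈ S, eI j * (T r * eI i - eI si * T r) := by
      rw [← Finset.sum_mul, hsum, one_mul]
    have hterm : ∀ j ∈ S, eI j * (T r * eI i - eI si * T r)
        = (if j = si then c₁ else 0) + (if j = i then -c₂ else 0) := by
      intro j _
      by_cases h1 : j = si
      · subst h1
        rw [if_pos rfl, if_neg (Ne.symm hine), add_zero]
        exact hZsi
      · by_cases h2 : j = i
        · subst h2
          rw [if_neg h1, if_pos rfl, zero_add]
          exact hZi
        · rw [if_neg h1, if_neg h2, add_zero]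
          exact hZj j h2 h1
    have hfin : T r * eI i - eI si * T r = c₁ - c₂ := by
      rw [hZsum, Finset.sum_congr rfl hterm, Finset.sum_add_distrib,
        Finset.sum_ite_eq' S si (fun _ => c₁), Finset.sum_ite_eq' S i (fun _ => -c₂)]
      have e1 : (if si ∈ S then c₁ else 0) = c₁ := by
        by_cases hsS : si ∈ S
        · rw [if_pos hsS]
        · rw [if_neg hsS, ← hc1E', hsupp si hsS, mul_zero]
      have e2 : (if i ∈ S then -c₂ else 0) = -c₂ := by
        by_cases hiS : i ∈ S
        · rw [if_pos hiS]
        · rw [if_neg hiS, ← hc2E', hsupp i hiS, mul_zero, neg_zero]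
      rw [e1, e2, sub_eq_add_neg]
    have := hfin
    rw [sub_eq_iff_eq_add] at this
    rw [this]
    abel
end

section
/- In the cyclotomic semi-rationalization algebra L̃(Λ) for the degenerate case, the two-sided ideals ⟨y₁^{Λ_{i₁}}ε(i) : i ∈ C⟩ and ⟨∏_{i∈I}(X₁ − i)^{Λᵢ}⟩ of L̃ coincide; that is, L̃/⟨y₁^{Λ_{i₁}}ε(i)⟩ = L̃/⟨∏_{i∈I}(X₁ − i)^{Λᵢ}⟩. -/
/-- In the semi-rationalization algebra `L̃` (degenerate case) — modelled by any `k`-algebra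
containing the commuting generator `X₁`, the orthogonal idempotents `ε(i)`, `i ∈ C`, and
the corner inverses `f(X₁)⁻¹ε(i)` for polynomials `f` with `f(i₁) ≠ 0` — the two-sided
ideals `⟨y₁^{Λ_{i₁}}ε(i) : i ∈ C⟩` and `⟨∏_{c∈I}(X₁ - c)^{Λ_c}⟩` coincide, where
`y₁ = Σ_{i∈C}(X₁ - i₁)ε(i)`, `I = ℤ/eℤ`, `e = char k`, and `Λ ∈ ℕ^I` is finitely
supported. -/
theorem cyclotomic_ideals_coincide (k : Type*) [Field k] (n e : ℕ) (hn : 0 < n)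
    [CharP k e]
    (A : Type*) [Ring A] [Algebra k A]
    (X1 : A) (C : Finset (Fin n → ZMod e)) (ε : (Fin n → ZMod e) → A)
    (Λ : ZMod e →₀ ℕ)
    (horth : ∀ i i', ε i * ε i' = if i = i' then ε i else 0)
    (hsum : ∑ i ∈ C, ε i = 1)
    (hX1comm : ∀ i, X1 * ε i = ε i * X1)
    -- corner inverses f(X₁)⁻¹ε(i) exist whenever f(i₁) ≠ 0
    (hinv : ∀ i ∈ C, ∀ f : Polynomial k,
      Polynomial.eval (ZMod.castHom (dvd_refl e) k (i ⟨0, hn⟩)) f ≠ 0 →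
        ∃ b : A, Polynomial.aeval X1 f * b = ε i ∧ b * Polynomial.aeval X1 f = ε i
          ∧ ε i * b = b ∧ b * ε i = b) :
    TwoSidedIdeal.span
        ((fun i : Fin n → ZMod e =>
            (∑ j ∈ C, (X1 - algebraMap k A (ZMod.castHom (dvd_refl e) k (j ⟨0, hn⟩))) * ε j)
                ^ (Λ (i ⟨0, hn⟩)) * ε i) '' ↑C)
      = TwoSidedIdeal.span
          {Polynomial.aeval X1
            (∏ c ∈ Λ.support,
              (Polynomial.X - Polynomial.C (ZMod.castHom (dvd_refl e) k c)) ^ (Λ c))} := by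
  -- notation
  set β : (Fin n → ZMod e) → k := fun i => ZMod.castHom (dvd_refl e) k (i ⟨0, hn⟩) with hβ
  set y : A := ∑ j ∈ C, (X1 - algebraMap k A (β j)) * ε j with hy
  -- ε i commutes with X1 - algebraMap c
  have hcomm : ∀ (i : Fin n → ZMod e) (c : k),
      ε i * (X1 - algebraMap k A c) = (X1 - algebraMap k A c) * ε i := by
    intro i c
    rw [mul_sub, sub_mul, hX1comm, Algebra.commutes]
  -- ε i commutes with aeval X1 f for any polynomial f
  have haevalcomm : ∀ (i : Fin n → ZMod e) (f : Polynomial k),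
      ε i * Polynomial.aeval X1 f = Polynomial.aeval X1 f * ε i := by
    intro i f
    induction f using Polynomial.induction_on' with
    | add p q hp hq => simp [mul_add, add_mul, hp, hq]
    | monomial m a =>
        rw [Polynomial.aeval_monomial]
        have hx : ∀ m : ℕ, ε i * X1 ^ m = X1 ^ m * ε i := by
          intro m
          induction m with
          | zero => simp
          | succ m ih => rw [pow_succ, ← mul_assoc, ih, mul_assoc, ← hX1comm, ← mul_assoc]
        rw [← mul_assoc, ← Algebra.commutes, mul_assoc, hx, mul_assoc]
  -- y * ε i = (X1 - β i) * ε i for i ∈ C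
  have hyε : ∀ i ∈ C, y * ε i = (X1 - algebraMap k A (β i)) * ε i := by
    intro i hi
    rw [hy, Finset.sum_mul]
    rw [Finset.sum_eq_single i]
    · rw [mul_assoc, horth, if_pos rfl]
    · intro j hj hji
      rw [mul_assoc, horth, if_neg hji, mul_zero]
    · intro h; exact absurd hi h
  -- y^m * ε i = (X1 - β i)^m * ε i for i ∈ C
  have hypow : ∀ i ∈ C, ∀ m : ℕ, y ^ m * ε i = (X1 - algebraMap k A (β i)) ^ m * ε i := by
    intro i hi m
    induction m with
    | zero => simp
    | succ m ih =>
        rw [pow_succ, mul_assoc, hyε i hi, ← hcomm, ← mul_assoc, ih, mul_assoc, hcomm,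
          ← mul_assoc, ← pow_succ]
  -- the big cyclotomic polynomial
  set P : Polynomial k :=
    ∏ c ∈ Λ.support, (Polynomial.X - Polynomial.C (ZMod.castHom (dvd_refl e) k c)) ^ (Λ c)
    with hP
  -- factorization of P relative to i
  have hfac : ∀ i : Fin n → ZMod e,
      P = (Polynomial.X - Polynomial.C (β i)) ^ (Λ (i ⟨0, hn⟩)) *
        ∏ c ∈ Λ.support.erase (i ⟨0, hn⟩),
          (Polynomial.X - Polynomial.C (ZMod.castHom (dvd_refl e) k c)) ^ (Λ c) := by
    intro i
    by_cases hmem : i ⟨0, hn⟩ ∈ Λ.support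
    · rw [hP, ← Finset.mul_prod_erase _ _ hmem]
    · have h0 : Λ (i ⟨0, hn⟩) = 0 := Finsupp.notMem_support_iff.mp hmem
      rw [h0, pow_zero, one_mul, Finset.erase_eq_of_notMem hmem, hP]
  -- the "rest" polynomial and its nonvanishing at β i
  have hrest : ∀ i : Fin n → ZMod e,
      Polynomial.eval (β i)
        (∏ c ∈ Λ.support.erase (i ⟨0, hn⟩),
          (Polynomial.X - Polynomial.C (ZMod.castHom (dvd_refl e) k c)) ^ (Λ c)) ≠ 0 := by
    intro i
    rw [Polynomial.eval_prod]
    apply Finset.prod_ne_zero_iff.mpr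
    intro c hc
    rw [Polynomial.eval_pow, Polynomial.eval_sub, Polynomial.eval_X, Polynomial.eval_C]
    apply pow_ne_zero
    rw [sub_ne_zero, hβ]
    intro h
    exact (Finset.mem_erase.mp hc).1 (ZMod.castHom_injective k h).symm
  -- P(X1) * ε i = g i * Q i where g i is the generator and Q i = rest(X1)
  have hPε : ∀ i ∈ C,
      Polynomial.aeval X1 P * ε i =
        (y ^ (Λ (i ⟨0, hn⟩)) * ε i) *
          Polynomial.aeval X1 (∏ c ∈ Λ.support.erase (i ⟨0, hn⟩),
            (Polynomial.X - Polynomial.C (ZMod.castHom (dvd_refl e) k c)) ^ (Λ c)) := by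
    intro i hi
    rw [hfac i, map_mul]
    have h1 : Polynomial.aeval X1 ((Polynomial.X - Polynomial.C (β i)) ^ (Λ (i ⟨0, hn⟩)))
        = (X1 - algebraMap k A (β i)) ^ (Λ (i ⟨0, hn⟩)) := by
      simp [Polynomial.aeval_X, Polynomial.aeval_C, Algebra.algebraMap_eq_smul_one]
    rw [h1, mul_assoc, ← haevalcomm, ← mul_assoc, hypow i hi]
  have spanle : ∀ (s : Set A) (I : TwoSidedIdeal A), s ⊆ I → TwoSidedIdeal.span s ≤ I :=
    fun s I hsub x hx => TwoSidedIdeal.mem_span_iff.mp hx _ hsub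
  apply le_antisymm
  · -- each generator g i lies in span {P(X1)}
    apply spanle
    rintro _ ⟨i, hi, rfl⟩
    simp only
    obtain ⟨b, hb1, hb2, hb3, hb4⟩ := hinv i hi _ (hrest i)
    have key : y ^ (Λ (i ⟨0, hn⟩)) * ε i = Polynomial.aeval X1 P * (ε i * b) := by
      rw [← mul_assoc, hPε i hi, mul_assoc, hb1, mul_assoc, horth, if_pos rfl]
    rw [key]
    exact TwoSidedIdeal.mul_mem_right _ _ _
      (TwoSidedIdeal.subset_span (Set.mem_singleton _))
  · -- P(X1) lies in the span of the g i
    apply spanle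
    rintro _ rfl
    have : Polynomial.aeval X1 P = ∑ i ∈ C, Polynomial.aeval X1 P * ε i := by
      rw [← Finset.mul_sum, hsum, mul_one]
    rw [this]
    refine sum_mem fun i hi => ?_
    rw [hPε i hi]
    exact TwoSidedIdeal.mul_mem_right _ _ _
      (TwoSidedIdeal.subset_span ⟨i, hi, rfl⟩)
end
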